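/- arXiv:1710.06821 — 5 statements merged into one kernel-verified Lean document; each statement's English description precedes it below -/
import Mathlib

section
/- Every monic post-critically finite quadratic polynomial with integer coefficients has one of the forms (x+a)^2 - a, (x+a)^2 - a - 1, or (x+a)^2 - a - 2 for some integer a. -/
/-!
Conjugating by `x ↦ x - b/2` turns `x² + b x + c` into `z² + t` with `t = c - b²/4 + b/2`, whose
critical point is `0`. If `b` is odd, `t = m/4` with `m` odd, so `|t|₂ = 4 > 1` and the `2`-adic
absolute value of the critical orbit of `z² + t` grows strictly. If `b` is even, `t` is an integer,
and the critical orbit escapes to infinity unless `-2 ≤ t ≤ 1/4`, i.e. `t ∈ {-2, -1, 0}`.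
-/

open Function

def critOrbit {R : Type*} [Semiring R] (t : R) (n : ℕ) : R :=
  (fun z => z ^ 2 + t)^[n] 0

section critOrbit

variable {R : Type*}

theorem critOrbit_succ [Semiring R] (t : R) (n : ℕ) :
    critOrbit t (n + 1) = critOrbit t n ^ 2 + t :=
  iterate_succ_apply' _ n 0

theorem critOrbit_one [Semiring R] (t : R) : critOrbit t 1 = t := by
  simp [critOrbit]

theorem strictMono_critOrbit_succ_of_step [Semiring R] {S : Type*} [Preorder S] {t : R}
    (v : R → S) (step : ∀ z, v t ≤ v z → v z < v (z ^ 2 + t)) :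
    StrictMono fun n => v (critOrbit t (n + 1)) := by
  have lower : ∀ n, v t ≤ v (critOrbit t (n + 1)) := by
    intro n
    induction n with
    | zero => rw [critOrbit_one]
    | succ n ih => rw [critOrbit_succ]; exact ih.trans (step _ ih).le
  refine strictMono_nat_of_lt_succ fun n => ?_
  rw [critOrbit_succ t (n + 1)]
  exact step _ (lower n)

theorem critOrbit_strictMono [CommRing R] [LinearOrder R] [IsStrictOrderedRing R] {t : R}
    (ht : 1 < 4 * t) : StrictMono (critOrbit t) :=
  strictMono_nat_of_lt_succ fun n => by
    rw [critOrbit_succ]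
    nlinarith [sq_nonneg (2 * critOrbit t n - 1)]

theorem abs_critOrbit_succ_strictMono [CommRing R] [LinearOrder R] [IsStrictOrderedRing R] {t : R}
    (ht : t < -2) : StrictMono fun n => |critOrbit t (n + 1)| := by
  refine strictMono_critOrbit_succ_of_step _ fun z hz => ?_
  rw [abs_of_neg (show t < 0 by linarith)] at hz
  have hlt : |z| < z ^ 2 + t := by
    nlinarith [sq_abs z, mul_pos (show 0 < |z| by linarith) (show 0 < |z| - 2 by linarith)]
  rwa [abs_of_pos (a := z ^ 2 + t) (by linarith [abs_nonneg z])]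

theorem absoluteValue_critOrbit_succ_strictMono [Ring R] {S : Type*} [CommRing S]
    [LinearOrder S] [IsStrictOrderedRing S] {v : AbsoluteValue R S} (hv : IsNonarchimedean v)
    {t : R} (ht : 1 < v t) : StrictMono fun n => v (critOrbit t (n + 1)) := by
  refine strictMono_critOrbit_succ_of_step v fun z hz => ?_
  have hsq : v z < v (z ^ 2) := by
    rw [sq, v.map_mul]
    have hz1 := ht.trans_le hz
    exact lt_mul_of_one_lt_right (zero_lt_one.trans hz1) hz1
  rw [hv.add_eq_left_of_lt (hz.trans_lt hsq)]
  exact hsq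

/-- `[-2, 1/4]` is the real slice of the Mandelbrot set. -/
theorem neg_two_le_and_four_mul_le_one_of_not_injective [CommRing R] [LinearOrder R]
    [IsStrictOrderedRing R] {t : R} (h : ¬Injective fun n => critOrbit t (n + 1)) :
    -2 ≤ t ∧ 4 * t ≤ 1 := by
  constructor <;> by_contra! ht <;> apply h
  · exact (abs_critOrbit_succ_strictMono ht).injective.of_comp (f := abs)
  · exact (critOrbit_strictMono ht).injective.comp (add_left_injective 1)

end critOrbit

theorem padicNorm_two_odd_div_four {m : ℤ} (hm : Odd m) : padicNorm 2 ((m : ℚ) / 4) = 4 := by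
  have hm1 : padicNorm 2 (m : ℚ) = 1 :=
    (padicNorm.int_eq_one_iff m).mpr <| by
      rwa [Nat.cast_ofNat, ← even_iff_two_dvd, Int.not_even_iff_odd]
  have h4 : padicNorm 2 (4 : ℚ) = 4⁻¹ := by
    rw [show (4 : ℚ) = ((2 : ℕ) : ℚ) * ((2 : ℕ) : ℚ) by norm_num, padicNorm.mul,
      padicNorm.padicNorm_p_of_prime]
    norm_num
  rw [padicNorm.div, hm1, h4, one_div, inv_inv]

theorem critOrbit_odd_div_four_injective {m : ℤ} (hm : Odd m) :
    Injective fun n => critOrbit ((m : ℚ) / 4) (n + 1) :=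
  (absoluteValue_critOrbit_succ_strictMono (v := IsAbsoluteValue.toAbsoluteValue (padicNorm 2))
    (fun _ _ => padicNorm.nonarchimedean)
    (show 1 < padicNorm 2 _ by rw [padicNorm_two_odd_div_four hm]; norm_num)).injective.of_comp

theorem iterate_quadratic_neg_half {K : Type*} [Field K] [CharZero K] (b c : K) (n : ℕ) :
    (fun x => x ^ 2 + b * x + c)^[n] (-b / 2) = critOrbit (c - b ^ 2 / 4 + b / 2) n - b / 2 := by
  have hconj : Semiconj (· - b / 2) (fun z => z ^ 2 + (c - b ^ 2 / 4 + b / 2))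
      (fun x => x ^ 2 + b * x + c) := fun z => by ring
  simpa [critOrbit, neg_div] using (hconj.iterate_right n 0).symm

/-- Every monic PCF quadratic polynomial with integer coefficients has one of the forms
`(x+a)^2 - a`, `(x+a)^2 - a - 1`, `(x+a)^2 - a - 2` for some integer `a`. -/
theorem stmt0 (b c : ℤ) (f : ℚ → ℚ) (hf : ∀ x, f x = x ^ 2 + (b : ℚ) * x + (c : ℚ))
    (crit : ℚ) (hcrit : crit = -(b : ℚ) / 2)
    (hfin : {y : ℚ | ∃ n : ℕ, 1 ≤ n ∧ f^[n] crit = y}.Finite) :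
    ∃ a : ℤ,
      (∀ x : ℚ, f x = (x + (a : ℚ)) ^ 2 - (a : ℚ)) ∨
      (∀ x : ℚ, f x = (x + (a : ℚ)) ^ 2 - (a : ℚ) - 1) ∨
      (∀ x : ℚ, f x = (x + (a : ℚ)) ^ 2 - (a : ℚ) - 2) := by
  set t : ℚ := c - (b : ℚ) ^ 2 / 4 + b / 2 with ht
  have horbit (n : ℕ) : f^[n] crit = critOrbit t n - b / 2 := by
    rw [funext hf, hcrit]
    exact iterate_quadratic_neg_half _ _ n
  have hnotinj : ¬Injective fun n => critOrbit t (n + 1) := fun hinj =>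
    Set.infinite_range_of_injective hinj <| (hfin.image (· + (b : ℚ) / 2)).subset <| by
      rintro _ ⟨n, rfl⟩
      exact ⟨_, ⟨n + 1, by omega, rfl⟩, by simp [horbit]⟩
  obtain ⟨a, rfl⟩ : Even b := by
    refine Int.not_odd_iff_even.mp fun ⟨a, hb⟩ => hnotinj ?_
    have hm : Odd (4 * c - 4 * a ^ 2 + 1) := ⟨2 * c - 2 * a ^ 2, by ring⟩
    convert critOrbit_odd_div_four_injective hm using 4
    rw [ht, hb]; push_cast; ring
  obtain ⟨e, rfl⟩ : ∃ e : ℤ, c = a ^ 2 - a + e := ⟨c - a ^ 2 + a, by ring⟩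
  have hte : t = e := by rw [ht]; push_cast; ring
  obtain ⟨he₁, he₂⟩ := neg_two_le_and_four_mul_le_one_of_not_injective hnotinj
  rw [hte] at he₁ he₂
  have he : e = 0 ∨ e = -1 ∨ e = -2 := by
    have : 4 * e ≤ 1 := by exact_mod_cast he₂
    have : -2 ≤ e := by exact_mod_cast he₁
    omega
  refine ⟨a, ?_⟩
  simp only [hf]
  rcases he with rfl | rfl | rfl
  · exact Or.inl fun x => by push_cast; ring
  · exact Or.inr <| Or.inl fun x => by push_cast; ring
  · exact Or.inr <| Or.inr fun x => by push_cast; ring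
end

section
/- Let a ∈ ℤ and let f(x) = (x+a)^2 - a be irreducible over ℚ. Then f^n is irreducible over ℚ for all n ≥ 1 if and only if f^2 is irreducible over ℚ. -/
/-!
Since `f = (X + a)² - a`, we get `f^[n] = (X + a)^(2^n) - a`, a shift of `X^(2^n) - a`, so the
theorem is Capelli's criterion for exponents `2^n`: `X^(2^n) - a` is irreducible as soon as `a` is
neither a square nor of the form `-4b⁴`. Irreducibility of `f^[2]`, i.e. of `X⁴ - a`, rules out
both, the second through `X⁴ + 4b⁴ = (X² + 2bX + 2b²)(X² - 2bX + 2b²)`.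
-/

open Polynomial

/-- The `n`-th iterate of a polynomial under composition. -/
noncomputable def iter {R : Type*} [CommRing R] (f : Polynomial R) : ℕ → Polynomial R
  | 0 => Polynomial.X
  | n + 1 => f.comp (iter f n)

open IntermediateField

universe u

section Quadratic

variable {K L : Type*} [Field K] [Field L] [Algebra K L] {a : K} {g : L}

lemma eq_zero_of_algebraMap_eq_mul (ha : ∀ b : K, b ^ 2 ≠ a) (hg : g ^ 2 = algebraMap K L a)
    {u v : K} (h : algebraMap K L u = algebraMap K L v * g) : v = 0 := by
  by_contra hv
  apply ha (u / v)
  apply (algebraMap K L).injective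
  rw [map_pow, map_div₀, h, mul_div_cancel_left₀ _ ((_root_.map_ne_zero _).mpr hv), hg]

/-- A fourth root `e = c + d g` of `a = g²` satisfies `e² = ±g`; comparing coordinates in the
basis `1, g` forces `a = -4c⁴`. -/
lemma add_mul_pow_four_ne (h2 : ∀ b : K, b ^ 2 ≠ a) (h4 : ∀ b : K, -4 * b ^ 4 ≠ a)
    (hg : g ^ 2 = algebraMap K L a) (c d : K) :
    (algebraMap K L c + algebraMap K L d * g) ^ 4 ≠ algebraMap K L a := by
  set e := algebraMap K L c + algebraMap K L d * g with he_def
  intro he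
  obtain ⟨s, hs, hes⟩ : ∃ s : K, s ^ 2 = 1 ∧ e ^ 2 = algebraMap K L s * g := by
    rcases sq_eq_sq_iff_eq_or_eq_neg.mp (show (e ^ 2) ^ 2 = g ^ 2 by rw [hg, ← he]; ring)
      with h | h
    · exact ⟨1, one_pow 2, by simp [h]⟩
    · exact ⟨-1, by norm_num, by simp [h]⟩
  have hcoeff : algebraMap K L (c ^ 2 + a * d ^ 2) = algebraMap K L (s - 2 * c * d) * g := by
    simp only [map_add, map_mul, map_sub, map_pow, map_ofNat]
    linear_combination
      -(algebraMap K L d) ^ 2 * hg + hes - (e + algebraMap K L c + algebraMap K L d * g) * he_def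
  have hcd : s - 2 * c * d = 0 := eq_zero_of_algebraMap_eq_mul h2 hg hcoeff
  have hnorm : c ^ 2 + a * d ^ 2 = 0 := by
    rw [hcd, map_zero, zero_mul] at hcoeff
    exact (map_eq_zero _).mp hcoeff
  exact h4 c (by linear_combination -4 * c ^ 2 * hnorm - a * (s + 2 * c * d) * hcd + a * hs)

end Quadratic

section AdjoinSqrt

variable {K L : Type*} [Field K] [Field L] [Algebra K L] {x : L}

lemma IntermediateField.exists_eq_add_mul_gen (hx : (minpoly K x).natDegree = 2) (y : K⟮x⟯) :
    ∃ c d : K, y = algebraMap K K⟮x⟯ c + algebraMap K K⟮x⟯ d * AdjoinSimple.gen K x := by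
  have hint : IsIntegral K x := by
    by_contra h
    simp [minpoly.eq_zero h] at hx
  set pb := adjoin.powerBasis hint
  obtain ⟨p, hp, rfl⟩ := pb.exists_eq_aeval y
  rw [adjoin.powerBasis_dim, hx] at hp
  refine ⟨p.coeff 0, p.coeff 1, ?_⟩
  rw [eq_X_add_C_of_natDegree_le_one (Nat.le_of_lt_succ hp), adjoin.powerBasis_gen]
  simp [add_comm, Algebra.algebraMap_eq_smul_one]

lemma IntermediateField.gen_sq_of_minpoly_eq (hx : minpoly K x = X ^ 2 - C a) :
    AdjoinSimple.gen K x ^ 2 = algebraMap K K⟮x⟯ a := by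
  simpa [hx, sub_eq_zero] using aeval_gen_minpoly K x

lemma IntermediateField.pow_four_ne_of_minpoly_eq (hx : minpoly K x = X ^ 2 - C a)
    (h2 : ∀ b : K, b ^ 2 ≠ a) (h4 : ∀ b : K, -4 * b ^ 4 ≠ a) (e : K⟮x⟯) :
    e ^ 4 ≠ algebraMap K K⟮x⟯ a := by
  obtain ⟨c, d, rfl⟩ := exists_eq_add_mul_gen (by rw [hx, natDegree_X_pow_sub_C]) e
  exact add_mul_pow_four_ne h2 h4 (gen_sq_of_minpoly_eq hx) c d

end AdjoinSqrt

/-- Induction on `m` via `K(√a)`: both conditions pass from `a` to `√a`, since a square root or a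
`-4b⁴` representation of `√a` would be a fourth root of `a` in `K(√a)`. -/
theorem X_pow_two_pow_sub_C_irreducible {K : Type u} [Field K] {a : K} (h2 : ∀ b : K, b ^ 2 ≠ a)
    (h4 : ∀ b : K, -4 * b ^ 4 ≠ a) (m : ℕ) : Irreducible (X ^ 2 ^ m - C a) := by
  induction m generalizing K with
  | zero => simpa using irreducible_X_sub_C a
  | succ m ih =>
    rw [pow_succ]
    refine X_pow_mul_sub_C_irreducible (X_pow_sub_C_irreducible_of_prime Nat.prime_two h2) ?_
    intro E _ _ x hx
    have hfour := pow_four_ne_of_minpoly_eq hx h2 h4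
    have hsq := gen_sq_of_minpoly_eq hx
    refine ih (fun b hb => hfour b ?_) (fun b hb => hfour (2 * b ^ 2) ?_)
    · rw [← hsq, ← hb]; ring
    · rw [← hsq, ← hb]; ring

lemma neg_four_mul_pow_four_ne_of_irreducible {K : Type*} [Field K] {a : K}
    (h : Irreducible (X ^ 4 - C a)) (b : K) : -4 * b ^ 4 ≠ a := by
  rintro rfl
  have hfactor : X ^ 4 - C (-4 * b ^ 4) =
      (X ^ 2 + C (2 * b) * X + C (2 * b ^ 2)) * (X ^ 2 + C (-(2 * b)) * X + C (2 * b ^ 2)) := by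
    simp only [map_neg, map_mul, map_pow, map_ofNat]
    ring
  have hdeg : ∀ s : K, (X ^ 2 + C s * X + C (2 * b ^ 2)).natDegree = 2 := fun s => by
    compute_degree!
  rcases h.isUnit_or_isUnit hfactor with hu | hu
  · exact two_ne_zero ((hdeg _).symm.trans (natDegree_eq_zero_of_isUnit hu))
  · exact two_ne_zero ((hdeg _).symm.trans (natDegree_eq_zero_of_isUnit hu))

theorem X_pow_two_pow_sub_C_irreducible_of_irreducible_X_pow_four {K : Type u} [Field K] {a : K}
    (h : Irreducible (X ^ 4 - C a)) (m : ℕ) : Irreducible (X ^ 2 ^ m - C a) :=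
  X_pow_two_pow_sub_C_irreducible
    (pow_ne_of_irreducible_X_pow_sub_C h (by norm_num) (by norm_num))
    (neg_four_mul_pow_four_ne_of_irreducible h) m

lemma iter_X_add_C_sq_sub_C {R : Type*} [CommRing R] (b : R) (n : ℕ) :
    iter ((X + C b) ^ 2 - C b) n = (X ^ 2 ^ n - C b).comp (X + C b) := by
  induction n with
  | zero => simp [iter]
  | succ n ih =>
    rw [iter, ih]
    simp only [sub_comp, pow_comp, add_comp, X_comp, C_comp, sub_add_cancel]
    rw [← pow_mul, ← pow_succ]

lemma irreducible_iter_X_add_C_sq_sub_C_iff {R : Type*} [CommRing R] (b : R) (n : ℕ) :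
    Irreducible (iter ((X + C b) ^ 2 - C b) n) ↔ Irreducible (X ^ 2 ^ n - C b) := by
  rw [iter_X_add_C_sq_sub_C, comp_eq_aeval, ← algEquivAevalXAddC_apply]
  exact MulEquiv.irreducible_iff (algEquivAevalXAddC b).toMulEquiv

theorem stmt3_general (a : ℤ) (f : Polynomial ℚ)
    (hf : f = (X + C (a : ℚ)) ^ 2 - C (a : ℚ)) :
    (∀ n : ℕ, 1 ≤ n → Irreducible (iter f n)) ↔ Irreducible (iter f 2) := by
  subst hf
  refine ⟨fun h => h 2 (by norm_num), fun h2 n _ => ?_⟩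
  rw [irreducible_iter_X_add_C_sq_sub_C_iff] at h2 ⊢
  exact X_pow_two_pow_sub_C_irreducible_of_irreducible_X_pow_four h2 n

/-- `f(x) = (x+a)^2 - a` irreducible over ℚ is stable iff its second iterate is irreducible. -/
theorem stmt3 (a : ℤ) (f : Polynomial ℚ)
    (hf : f = (X + C (a : ℚ)) ^ 2 - C (a : ℚ)) (hirr : Irreducible f) :
    (∀ n : ℕ, 1 ≤ n → Irreducible (iter f n)) ↔ Irreducible (iter f 2) :=
  stmt3_general a f hf
end

section
/- Let a ∈ ℤ and let f(x) = (x+a)^2 - a - 2 ∈ ℤ[x] be irreducible over ℚ. Then f^2(x) is reducible over ℚ if and only if a = 2 - (2v^2 - 2)^2 for some v ∈ ℤ. -/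
/-!
Substituting `x = y - a` turns `f ∘ f` into the biquadratic `y⁴ - 4y² + (2 - a)`, whose
discriminant `4(a + 2)` is not a rational square because the quadratic `f` has no rational root.
Such a biquadratic has no root either, so if it is reducible it is a product of two monic
quadratics, and comparing coefficients forces the factorisation
`(y² + by + d)(y² - by + d)` with `d² = 2 - a` and `b² = 2d + 4`. As `ℤ` is integrally closed,
`b` and `d` are integers; then `b = 2v` is even and `d = 2v² - 2`.
-/

open Polynomial

namespace Polynomial

variable {R : Type*}

theorem Monic.eq_X_sq_add_C_mul_X_add_C [CommSemiring R] {p : R[X]} (hm : p.Monic)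
    (hnd : p.natDegree = 2) : p = X ^ 2 + C (p.coeff 1) * X + C (p.coeff 0) := by
  have h2 : p.coeff 2 = 1 := hnd ▸ hm.coeff_natDegree
  conv_lhs => rw [p.as_sum_range_C_mul_X_pow, hnd]
  simp only [Nat.reduceAdd, Finset.sum_range_succ, Finset.range_one, Finset.sum_singleton,
    pow_zero, mul_one, pow_one, h2, map_one, one_mul]
  ring

variable [CommRing R]

theorem irreducible_comp_X_add_C_iff (p : R[X]) (t : R) :
    Irreducible (p.comp (X + C t)) ↔ Irreducible p := by
  rw [comp_eq_aeval, ← algEquivAevalXAddC_apply, MulEquiv.irreducible_iff]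

theorem biquadratic_eq_mul {p q b d : R} (hd : d ^ 2 = q) (hb : b ^ 2 = 2 * d - p) :
    X ^ 4 + C p * X ^ 2 + C q = (X ^ 2 + C b * X + C d) * (X ^ 2 - C b * X + C d) := by
  rw [← hd, show p = 2 * d - b ^ 2 by rw [hb]; ring]
  simp only [map_sub, map_mul, map_pow, map_ofNat]
  ring

variable [IsDomain R]

theorem Monic.exists_quadratic_factors_of_not_irreducible {p : R[X]} (hm : p.Monic)
    (hdeg : p.natDegree = 4) (hroot : ∀ x, ¬ p.IsRoot x) (hred : ¬ Irreducible p) :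
    ∃ b d b' d' : R, p = (X ^ 2 + C b * X + C d) * (X ^ 2 + C b' * X + C d') := by
  have hp1 : p ≠ 1 := by rintro rfl; simp at hdeg
  rw [hm.irreducible_iff_natDegree', hdeg] at hred
  push Not at hred
  obtain ⟨f, g, hf, hg, rfl, hgdeg⟩ := hred hp1
  rw [Finset.mem_Ioc] at hgdeg
  have hfg := hf.natDegree_mul hg
  rw [hdeg] at hfg
  obtain hg1 | hg2 : g.natDegree = 1 ∨ g.natDegree = 2 := by omega
  · refine absurd ?_ (hroot (-g.coeff 0))
    rw [hg.eq_X_add_C hg1]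
    simp
  · rw [hf.eq_X_sq_add_C_mul_X_add_C (by omega), hg.eq_X_sq_add_C_mul_X_add_C hg2]
    exact ⟨_, _, _, _, rfl⟩

theorem eq_of_biquadratic_eq_mul {p q b d b' d' : R}
    (h : X ^ 4 + C p * X ^ 2 + C q = (X ^ 2 + C b * X + C d) * (X ^ 2 + C b' * X + C d')) :
    (d - d') ^ 2 = p ^ 2 - 4 * q ∨ (d ^ 2 = q ∧ b ^ 2 = 2 * d - p) := by
  have hexp : (X ^ 2 + C b * X + C d) * (X ^ 2 + C b' * X + C d') = X ^ 4 + C (b + b') * X ^ 3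
      + C (d + d' + b * b') * X ^ 2 + C (b * d' + b' * d) * X + C (d * d') := by
    simp only [map_add, map_mul]
    ring
  rw [hexp] at h
  have hcoeff (k : ℕ) := congrArg (coeff · k) h
  have h3 := hcoeff 3
  have h2 := hcoeff 2
  have h1 := hcoeff 1
  have h0 := hcoeff 0
  simp only [coeff_add, coeff_C_mul, coeff_X_pow, coeff_X, coeff_C] at h3 h2 h1 h0
  norm_num at h3 h2 h1 h0
  obtain rfl : b' = -b := by linear_combination -h3
  have hsplit : b * (d' - d) = 0 := by linear_combination -h1
  rcases mul_eq_zero.mp hsplit with rfl | hdd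
  · left
    linear_combination (-(d + d') - p) * h2 + 4 * h0
  · obtain rfl : d' = d := by linear_combination hdd
    right
    exact ⟨by linear_combination -h0, by linear_combination h2⟩

theorem not_irreducible_biquadratic_iff {p q : R}
    (hdisc : ∀ s : R, s ^ 2 ≠ p ^ 2 - 4 * q) :
    ¬ Irreducible (X ^ 4 + C p * X ^ 2 + C q) ↔ ∃ b d : R, d ^ 2 = q ∧ b ^ 2 = 2 * d - p := by
  constructor
  · intro hred
    have hm : (X ^ 4 + C p * X ^ 2 + C q).Monic := by monicity!
    have hdeg : (X ^ 4 + C p * X ^ 2 + C q).natDegree = 4 := by compute_degree!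
    -- a root `x` would make `2 x ^ 2 + p` a square root of the discriminant
    have hroot (x : R) : ¬ (X ^ 4 + C p * X ^ 2 + C q).IsRoot x := by
      intro hx
      refine hdisc (2 * x ^ 2 + p) ?_
      simp only [IsRoot, eval_add, eval_pow, eval_mul, eval_C, eval_X] at hx
      linear_combination 4 * hx
    obtain ⟨b, d, b', d', h⟩ := hm.exists_quadratic_factors_of_not_irreducible hdeg hroot hred
    rcases eq_of_biquadratic_eq_mul h with hsq | hbd
    · exact absurd hsq (hdisc _)
    · exact ⟨b, d, hbd⟩
  · rintro ⟨b, d, hd, hb⟩ hirr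
    rw [biquadratic_eq_mul hd hb] at hirr
    rcases hirr.isUnit_or_isUnit rfl with h | h
    · have : (X ^ 2 + C b * X + C d).natDegree = 2 := by compute_degree!
      simp [natDegree_eq_zero_of_isUnit h] at this
    · have : (X ^ 2 - C b * X + C d).natDegree = 2 := by compute_degree!
      simp [natDegree_eq_zero_of_isUnit h] at this

end Polynomial

theorem Rat.exists_intCast_eq_of_sq_eq_intCast {q : ℚ} {n : ℤ} (h : q ^ 2 = n) :
    ∃ m : ℤ, (m : ℚ) = q :=
  IsIntegrallyClosed.isIntegral_iff.mp
    ⟨X ^ 2 - C n, monic_X_pow_sub_C n two_ne_zero, by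
      simp only [eval₂_sub, eval₂_pow, eval₂_X, eval₂_C, h]
      simp⟩

theorem exists_rat_sq_eq_two_sub_and_sq_eq_iff (a : ℤ) :
    (∃ b d : ℚ, d ^ 2 = 2 - a ∧ b ^ 2 = 2 * d + 4) ↔ ∃ v : ℤ, a = 2 - (2 * v ^ 2 - 2) ^ 2 := by
  constructor
  · rintro ⟨b, d, hd, hb⟩
    obtain ⟨m, rfl⟩ := Rat.exists_intCast_eq_of_sq_eq_intCast (n := 2 - a) (by push_cast; exact hd)
    obtain ⟨k, rfl⟩ :=
      Rat.exists_intCast_eq_of_sq_eq_intCast (n := 2 * m + 4) (by push_cast; exact hb)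
    have hm : m ^ 2 = 2 - a := by exact_mod_cast hd
    have hk : k ^ 2 = 2 * m + 4 := by exact_mod_cast hb
    obtain ⟨v, rfl⟩ : Even k := Int.even_pow.mp ⟨m + 2, by rw [hk]; ring⟩ |>.1
    obtain rfl : m = 2 * v ^ 2 - 2 := by linarith
    exact ⟨v, by linear_combination hm⟩
  · rintro ⟨v, rfl⟩
    exact ⟨2 * v, 2 * v ^ 2 - 2, by push_cast; ring, by ring⟩

/-- For irreducible `f(x) = (x+a)^2 - a - 2`, the second iterate is reducible over ℚ
iff `a = 2 - (2v^2 - 2)^2` for some integer `v`. -/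
theorem stmt4 (a : ℤ) (f : Polynomial ℚ)
    (hf : f = (X + C (a : ℚ)) ^ 2 - C (a : ℚ) - 2) (hirr : Irreducible f) :
    ¬ Irreducible (iter f 2) ↔ ∃ v : ℤ, a = 2 - (2 * v ^ 2 - 2) ^ 2 := by
  have hiter : iter f 2 = (X ^ 4 + C (-4) * X ^ 2 + C (2 - a : ℚ)).comp (X + C (a : ℚ)) := by
    simp only [iter, comp_X]
    rw [hf]
    simp only [sub_comp, add_comp, pow_comp, mul_comp, neg_comp, X_comp, C_comp, ofNat_comp,
      map_sub, map_neg, map_ofNat]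
    ring
  -- a square root `s` of the discriminant would give `f` the root `s / 2 - a`
  have hdisc (s : ℚ) : s ^ 2 ≠ (-4) ^ 2 - 4 * (2 - a) := by
    intro hs
    have hroot : f.IsRoot (s / 2 - a) := by
      rw [hf]
      simp only [IsRoot, eval_sub, eval_pow, eval_add, eval_X, eval_C, eval_ofNat]
      linear_combination hs / 4
    have hdeg : f.degree = 2 := by rw [hf]; compute_degree!
    exact absurd (degree_eq_one_of_irreducible_of_root hirr hroot) (by rw [hdeg]; decide)
  rw [hiter, irreducible_comp_X_add_C_iff, not_irreducible_biquadratic_iff hdisc, ←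
    exists_rat_sq_eq_two_sub_and_sq_eq_iff]
  simp only [sub_neg_eq_add]
end

section
/- Let a ∈ ℤ and f(x) = (x+a)^2 - a. For any odd prime p such that f mod p is irreducible over 𝔽_p, every element of the post-critical orbit of f mod p is a square in 𝔽_p if and only if -a ≡ b² (mod p) for some b. Consequently, -a is a square in 𝔽_p for all such p exactly when a = -b² for some b ∈ ℤ. -/
/-!
Since `f(-a) = -a`, the post-critical orbit of `f` is `{-a}`, which gives the first part.
Over any field, `(X + a)² - a` is irreducible iff `a` is a non-square, so the second part asks
for a prime `p` at which both `a` and `-a` are non-squares, whenever neither `a` nor `-a` is a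
square in `ℤ`. Writing `|a| = 2^e m` with `m` odd,
quadratic reciprocity and the Chinese remainder theorem give some `n ≡ 1 (mod 4)` with
`J(a | n) = -1`; as `J(a | ·)` only depends on its argument mod `4|a|`, Dirichlet's theorem then
turns `n` into a prime `p ≡ 1 (mod 4)` with `J(a | p) = J(-a | p) = -1`.
-/

open Polynomial NumberTheorySymbols

theorem eval_iter_of_isFixedPt {R : Type*} [CommRing R] {f : R[X]} {x : R}
    (hx : f.eval x = x) (n : ℕ) : (iter f n).eval x = x := by
  induction n with
  | zero => simp [iter]
  | succ n ih => rw [iter, eval_comp, ih, hx]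

theorem eval_neg_iter_X_add_C_sq_sub_C {R : Type*} [CommRing R] (c : R) (n : ℕ) :
    (iter ((X + C c) ^ 2 - C c) n).eval (-c) = -c :=
  eval_iter_of_isFixedPt (by simp) n

theorem irreducible_X_add_C_sq_sub_C_iff {K : Type*} [Field K] (b c : K) :
    Irreducible ((X + C b) ^ 2 - C c) ↔ ¬IsSquare c := by
  have : (X + C b) ^ 2 - C c = algEquivAevalXAddC b (X ^ 2 - C c) := by simp
  rw [this, MulEquiv.irreducible_iff, X_pow_sub_C_irreducible_iff_of_prime Nat.prime_two,
    isSquare_iff_exists_sq]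
  simp [eq_comm]

theorem Nat.exists_prime_odd_factorization_of_not_isSquare {n : ℕ} (h : ¬IsSquare n) :
    ∃ p, p.Prime ∧ Odd (n.factorization p) := by
  by_contra! heven
  have hn : n ≠ 0 := by rintro rfl; exact h ⟨0, rfl⟩
  refine h ⟨n.factorization.prod fun p k => p ^ (k / 2), ?_⟩
  rw [← sq, Finsupp.prod, ← Finset.prod_pow]
  conv_lhs => rw [← Nat.prod_factorization_pow_eq_self hn]
  refine Finset.prod_congr rfl fun p hp => ?_
  have hk := Nat.not_odd_iff_even.1 (heven p (Nat.prime_of_mem_primeFactors hp))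
  rw [← pow_mul, Nat.div_mul_cancel hk.two_dvd]

namespace jacobiSym

theorem eq_of_modEq_left {n t m : ℕ} (h : n ≡ t [MOD m]) : J(n | m) = J(t | m) :=
  mod_left' (by rw [← Int.natCast_mod, ← Int.natCast_mod, h])

theorem natAbs_left_of_mod_four_eq_one (a : ℤ) {n : ℕ} (hn : n % 4 = 1) :
    J(a.natAbs | n) = J(a | n) := by
  rcases Int.natAbs_eq a with ha | ha <;> nth_rw 2 [ha]
  rw [jacobiSym.neg _ (Nat.odd_iff.2 (by omega)), ZMod.χ₄_nat_one_mod_four hn, one_mul]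

theorem exists_eq_neg_one_of_not_isSquare {m : ℕ} (hm : Odd m) (hsq : ¬IsSquare m) :
    ∃ t : ℕ, J(t | m) = -1 := by
  obtain ⟨q, hq, hk⟩ := Nat.exists_prime_odd_factorization_of_not_isSquare hsq
  have hm0 : m ≠ 0 := by rintro rfl; exact hsq ⟨0, rfl⟩
  have hqm : q ∣ m := Nat.dvd_of_factorization_pos hk.pos.ne'
  have hq2 : q ≠ 2 := by rintro rfl; exact hm.not_two_dvd_nat hqm
  have : Fact q.Prime := ⟨hq⟩
  obtain ⟨r, hr⟩ := FiniteField.exists_nonsquare (F := ZMod q) (by rwa [ZMod.ringChar_zmod_n])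
  obtain ⟨t, htq, htm⟩ := Nat.chineseRemainder (Nat.coprime_ordCompl hq hm0) r.val 1
  have hJq : J(t | q) = -1 := by
    rw [eq_of_modEq_left htq, ZMod.nonsquare_iff_jacobiSym_eq_neg_one]
    simpa using hr
  have hJm : J(t | ordCompl[q] m) = 1 := by
    rw [eq_of_modEq_left htm, Nat.cast_one, one_left]
  refine ⟨t, ?_⟩
  conv_lhs => rw [← Nat.ordProj_mul_ordCompl_eq_self m q]
  rw [mul_right' _ (pow_ne_zero _ hq.ne_zero) (Nat.ordCompl_pos q hm0).ne', pow_right, hJq, hJm,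
    hk.neg_one_pow, mul_one]

theorem exists_mod_four_eq_one_and_eq_neg_one {a : ℤ} (ha : ¬IsSquare a) (ha' : ¬IsSquare (-a)) :
    ∃ n : ℕ, n % 4 = 1 ∧ J(a | n) = -1 := by
  have hsq : ¬IsSquare a.natAbs := by
    rintro ⟨r, hr⟩
    rcases Int.natAbs_eq a with h | h
    · exact ha ⟨r, by rw [h, hr]; push_cast; rfl⟩
    · exact ha' ⟨r, by rw [h, neg_neg, hr]; push_cast; rfl⟩
  obtain ⟨e, m, hm, he⟩ := Nat.exists_eq_two_pow_mul_odd fun h => hsq ⟨0, h⟩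
  -- `s` prescribes `n` mod 8, hence `χ₈ n = J(2 | n)`; `t` prescribes `n` mod `m`
  obtain ⟨s, t, hs, hst⟩ : ∃ s t : ℕ, s % 4 = 1 ∧ ZMod.χ₈ s ^ e * J(t | m) = -1 := by
    by_cases hmsq : IsSquare m
    · have heo : Odd e := by
        by_contra hodd
        exact hsq (he ▸ ((Nat.not_odd_iff_even.1 hodd).isSquare_pow 2).mul hmsq)
      refine ⟨5, 1, rfl, ?_⟩
      rw [Nat.cast_one, one_left, mul_one, ← heo.neg_one_pow]
      rfl
    · obtain ⟨t, ht⟩ := exists_eq_neg_one_of_not_isSquare hm hmsq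
      exact ⟨1, t, rfl, by rw [ht]; simp⟩
  obtain ⟨n, hn8, hnm⟩ := Nat.chineseRemainder
    (Nat.Coprime.pow_left 3 (Nat.coprime_two_left.2 hm) : Nat.Coprime (2 ^ 3) m) s t
  have hn4 : n % 4 = 1 := by have := hn8; unfold Nat.ModEq at this; omega
  have hn : Odd n := Nat.odd_iff.2 (by omega)
  refine ⟨n, hn4, ?_⟩
  rw [← natAbs_left_of_mod_four_eq_one a hn4, he, Nat.cast_mul, Nat.cast_pow, mul_left, pow_left,
    Nat.cast_two, at_two hn, quadratic_reciprocity_one_mod_four' hm hn4, eq_of_modEq_left hnm,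
    ZMod.χ₈_nat_mod_eight, hn8, ← ZMod.χ₈_nat_mod_eight, hst]

theorem exists_prime_modEq_and_eq_neg_one {a : ℤ} {n : ℕ} (hn : Odd n) (h : J(a | n) = -1) :
    ∃ p, p.Prime ∧ p ≡ n [MOD 4 * a.natAbs] ∧ J(a | p) = -1 := by
  have hcop : a.gcd n = 1 := by
    by_contra hne
    rw [eq_zero_iff.2 ⟨hn.pos.ne', hne⟩] at h
    exact absurd h (by decide)
  have ha0 : a ≠ 0 := by
    rintro rfl
    rw [Int.gcd_zero_left, Int.natAbs_natCast] at hcop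
    rw [hcop, one_right] at h
    exact absurd h (by decide)
  obtain ⟨p, -, hp, hpn⟩ := Nat.forall_exists_prime_gt_and_modEq 0 (by positivity)
    (Nat.Coprime.mul_right ((Nat.coprime_two_right.2 hn).pow_right 2) (Nat.Coprime.symm hcop))
  have hpo : Odd p := by
    have h4 : p % 4 = n % 4 := Nat.ModEq.of_mul_right a.natAbs hpn
    have := Nat.odd_iff.1 hn
    exact Nat.odd_iff.2 (by omega)
  exact ⟨p, hp, hpn, by rw [mod_right a hpo, hpn, ← mod_right a hn, h]⟩

end jacobiSym

theorem exists_prime_not_isSquare_intCast_and_neg {a : ℤ} (ha : ¬IsSquare a)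
    (ha' : ¬IsSquare (-a)) :
    ∃ p, p.Prime ∧ Odd p ∧ ¬IsSquare (a : ZMod p) ∧ ¬IsSquare (-(a : ZMod p)) := by
  obtain ⟨n, hn4, hn⟩ := jacobiSym.exists_mod_four_eq_one_and_eq_neg_one ha ha'
  obtain ⟨p, hp, hpn, hpa⟩ := jacobiSym.exists_prime_modEq_and_eq_neg_one (Nat.odd_iff.2 (by omega)) hn
  have hp4 : p % 4 = 1 := Eq.trans (Nat.ModEq.of_mul_right a.natAbs hpn) hn4
  have hpo : Odd p := Nat.odd_iff.2 (by omega)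
  have hpa' : J(-a | p) = -1 := by
    rw [jacobiSym.neg _ hpo, ZMod.χ₄_nat_one_mod_four hp4, one_mul, hpa]
  refine ⟨p, hp, hpo, ZMod.nonsquare_of_jacobiSym_eq_neg_one hpa, ?_⟩
  simpa using ZMod.nonsquare_of_jacobiSym_eq_neg_one hpa'

/-- For `f(x) = (x+a)^2 - a` irreducible over ℚ: for each odd prime `p` with `f mod p`
irreducible, every element of the post-critical orbit of `f mod p` (orbit of the critical
point `-a`) is a square iff `-a` is a square mod `p`; and `-a` is a square mod all such
`p` exactly when `a = -b^2` for some integer `b`. -/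
theorem stmt13 (a : ℤ) (fz : Polynomial ℤ) (hfz : fz = (X + C a) ^ 2 - C a)
    (hirr : Irreducible (Polynomial.map (Int.castRingHom ℚ) fz)) :
    (∀ p : ℕ, p.Prime → Odd p →
        Irreducible (Polynomial.map (Int.castRingHom (ZMod p)) fz) →
        ((∀ i : ℕ, 1 ≤ i →
            IsSquare (Polynomial.eval (-(a : ZMod p))
              (iter (Polynomial.map (Int.castRingHom (ZMod p)) fz) i))) ↔
          ∃ b : ZMod p, b ^ 2 = -(a : ZMod p))) ∧
    ((∀ p : ℕ, p.Prime → Odd p →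
        Irreducible (Polynomial.map (Int.castRingHom (ZMod p)) fz) →
        IsSquare (-(a : ZMod p))) ↔ ∃ b : ℤ, a = -b ^ 2) := by
  have hmap (R : Type) [CommRing R] :
      fz.map (Int.castRingHom R) = (X + C (a : R)) ^ 2 - C (a : R) := by
    simp [hfz]
  simp only [hmap] at hirr ⊢
  refine ⟨fun p _ _ _ => ?_, ⟨fun h => ?_, ?_⟩⟩
  · simp only [eval_neg_iter_X_add_C_sq_sub_C, isSquare_iff_exists_sq,
      eq_comm (b := -(a : ZMod p))]
    exact ⟨fun h => h 1 le_rfl, fun h _ _ => h⟩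
  · have ha : ¬IsSquare a := fun hsq =>
      (irreducible_X_add_C_sq_sub_C_iff _ _).1 hirr (hsq.map (Int.castRingHom ℚ))
    by_contra hb
    have ha' : ¬IsSquare (-a) := fun ⟨b, hb'⟩ => hb ⟨b, by linear_combination -hb'⟩
    obtain ⟨p, hp, hpo, hpa, hpa'⟩ := exists_prime_not_isSquare_intCast_and_neg ha ha'
    have : Fact p.Prime := ⟨hp⟩
    exact hpa' (h p hp hpo ((irreducible_X_add_C_sq_sub_C_iff _ _).2 hpa))
  · rintro ⟨b, rfl⟩ p _ _ _
    exact ⟨b, by push_cast; ring⟩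
end

section
/- Let a, b ∈ ℤ with a = -b² and f(x) = (x - b²)² + b². Then for every odd prime p, f mod p does not have all elements of its post-critical orbit non-squares in 𝔽_p; in particular, for every prime p there exists n ≤ 2 such that f^(n+1) mod p is reducible, i.e., f^3 mod p is reducible for every prime p. -/
/-!
With `c = b²`, the map `f = (X - c)² + c` fixes its critical point `c`, so
`f^[n] = (X - c)^(2^n) + c` and the post-critical orbit is `{c}`, which consists of a square.
Up to the shift `X ↦ X + c`, `f^[3]` is `X⁸ + b²`, and this splits into two quartics as soon as
one of `-1`, `2b`, `-2b` is a square. In a finite field one of them always is: the product of two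
non-squares is a square.
-/

open Polynomial

section Iterate

variable {R : Type*} [CommRing R]

theorem iter_X_sub_C_sq_add_C (c : R) (n : ℕ) :
    iter ((X - C c) ^ 2 + C c) n = (X - C c) ^ 2 ^ n + C c := by
  induction n with
  | zero => simp [iter]
  | succ n ih =>
    rw [iter, ih, add_comp, pow_comp, sub_comp, X_comp, C_comp, add_sub_cancel_right, ← pow_mul,
      ← pow_succ]

theorem eval_iter_X_sub_C_sq_add_C (c : R) (n : ℕ) :
    (iter ((X - C c) ^ 2 + C c) n).eval c = c := by
  simp [iter_X_sub_C_sq_add_C]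

end Iterate

theorem Polynomial.not_irreducible_of_eq_biquadratic_mul {K : Type*} [Field K] {P : K[X]}
    {s t s' t' : K} (hP : P = (X ^ 4 + C s * X ^ 2 + C t) * (X ^ 4 + C s' * X ^ 2 + C t')) :
    ¬Irreducible P := fun hirr ↦ by
  have hdeg (u v : K) : (X ^ 4 + C u * X ^ 2 + C v).degree = 4 := by compute_degree!
  rcases hirr.isUnit_or_isUnit hP with hu | hu
  · simpa [hdeg] using isUnit_iff_degree_eq_zero.1 hu
  · simpa [hdeg] using isUnit_iff_degree_eq_zero.1 hu

theorem Polynomial.not_irreducible_X_pow_eight_add_C_sq {K : Type*} [Field K] {b : K}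
    (h : IsSquare (-1 : K) ∨ IsSquare (2 * b) ∨ IsSquare (-(2 * b))) :
    ¬Irreducible (X ^ 8 + C (b ^ 2)) := by
  rcases h with ⟨i, hi⟩ | ⟨s, hs⟩ | ⟨t, ht⟩
  · refine not_irreducible_of_eq_biquadratic_mul
      (s := 0) (t := i * b) (s' := 0) (t' := -(i * b)) ?_
    have hC : (-1 : K[X]) = C i * C i := by simpa using congrArg C hi
    simp only [map_zero, zero_mul, add_zero, map_mul, map_neg, map_pow]
    linear_combination (-C b ^ 2) * hC
  · refine not_irreducible_of_eq_biquadratic_mul (s := s) (t := b) (s' := -s) (t' := b) ?_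
    have hC : (2 * C b : K[X]) = C s * C s := by simpa [map_ofNat C 2] using congrArg C hs
    simp only [map_neg, map_pow]
    linear_combination (-X ^ 4 : K[X]) * hC
  · refine not_irreducible_of_eq_biquadratic_mul (s := t) (t := -b) (s' := -t) (t' := -b) ?_
    have hC : (-(2 * C b) : K[X]) = C t * C t := by simpa [map_ofNat C 2] using congrArg C ht
    simp only [map_neg, map_pow]
    linear_combination (-X ^ 4 : K[X]) * hC

theorem Polynomial.not_irreducible_X_sub_C_pow_eight_add_C_sq {K : Type*} [Field K] (c : K) {b : K}
    (h : IsSquare (-1 : K) ∨ IsSquare (2 * b) ∨ IsSquare (-(2 * b))) :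
    ¬Irreducible ((X - C c) ^ 8 + C (b ^ 2)) := by
  have hshift :=
    MulEquiv.irreducible_iff (algEquivAevalXAddC (-c)).toMulEquiv (x := X ^ 8 + C (b ^ 2))
  simpa [sub_eq_add_neg] using hshift.not.2 (not_irreducible_X_pow_eight_add_C_sq h)

theorem FiniteField.isSquare_or_isSquare_or_isSquare_mul {F : Type*} [Field F] [Fintype F]
    (a b : F) : IsSquare a ∨ IsSquare b ∨ IsSquare (a * b) := by
  classical
  refine or_iff_not_imp_left.2 fun ha ↦ or_iff_not_imp_left.2 fun hb ↦ ?_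
  have hab : a * b ≠ 0 := mul_ne_zero (fun h ↦ ha (h ▸ .zero)) (fun h ↦ hb (h ▸ .zero))
  rw [← quadraticChar_one_iff_isSquare hab, map_mul, quadraticChar_neg_one_iff_not_isSquare.2 ha,
    quadraticChar_neg_one_iff_not_isSquare.2 hb, neg_one_mul, neg_neg]

/-- For `f(x) = (x - b^2)^2 + b^2`: modulo every odd prime, some element of the
post-critical orbit (the orbit of the critical point `b^2`) is a square, and `f^3`
is reducible modulo every prime. -/
theorem stmt14 (b : ℤ) (f : Polynomial ℤ) (hf : f = (X - C (b ^ 2)) ^ 2 + C (b ^ 2)) :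
    (∀ p : ℕ, p.Prime → Odd p →
        ∃ i : ℕ, 1 ≤ i ∧
          IsSquare (Polynomial.eval ((b : ZMod p) ^ 2)
            (iter (Polynomial.map (Int.castRingHom (ZMod p)) f) i))) ∧
    (∀ p : ℕ, p.Prime →
        ¬ Irreducible (iter (Polynomial.map (Int.castRingHom (ZMod p)) f) 3)) := by
  have hmap (p : ℕ) : f.map (Int.castRingHom (ZMod p))
      = (X - C ((b : ZMod p) ^ 2)) ^ 2 + C ((b : ZMod p) ^ 2) := by
    simp [hf]
  refine ⟨fun p _ _ ↦ ⟨1, le_rfl, ?_⟩, fun p hp ↦ ?_⟩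
  · rw [hmap, eval_iter_X_sub_C_sq_add_C]
    exact .sq _
  · have := Fact.mk hp
    rw [hmap, iter_X_sub_C_sq_add_C]
    exact not_irreducible_X_sub_C_pow_eight_add_C_sq _ <|
      by simpa using FiniteField.isSquare_or_isSquare_or_isSquare_mul (-1) (2 * (b : ZMod p))
end
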